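/- The capacity with no side information is upper bounded by the capacity with causal transmitter side information, which is upper bounded by the capacity with side information at both transmitter and receiver: C_Sm(min_i a_i) ≤ C_Sh ≤ Σᵢ pᵢ·C_Sm(aᵢ). -/

import Mathlib

/-!
Restricting the Shannon strategies to constant vectors `t = (x, …, x)` turns the state-dependent
channel into the plain AWGN channel, because the weights `pᵢ` sum to one; this gives the lower
bound. For the upper bound, the output density of the state-dependent channel is the
`p`-mixture of the output densities of the marginals `Tᵢ`, so the log-sum inequality bounds the
divergence at each input `t` by `Σ pᵢ D(N(tᵢ, 1) ‖ P_{Tᵢ + N})`; averaging over `t` gives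
`Σ pᵢ I(Tᵢ; Tᵢ + N)`. Gaussian tails make every divergence integrable and bounded uniformly over
inputs in `[-a, a]`, so all the suprema are finite.
-/

open MeasureTheory Real Set

/-- The standard Gaussian density. -/
noncomputable def φ (x : ℝ) : ℝ := (Real.sqrt (2 * π))⁻¹ * Real.exp (-x ^ 2 / 2)

/-- Mutual information of an input measure `μ` on a type `α` through the channel with
conditional output density `g y t`. -/
noncomputable def MI {α : Type*} [MeasurableSpace α] (μ : Measure α) (g : ℝ → α → ℝ) : ℝ :=
  ∫ t, (∫ y : ℝ, g y t * Real.log (g y t / ∫ s, g y s ∂μ)) ∂μ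

/-- Smith's amplitude-constrained AWGN capacity under amplitude constraint `a`. -/
noncomputable def CSm (a : ℝ) : ℝ :=
  sSup {x : ℝ | ∃ F : Measure ℝ, IsProbabilityMeasure F ∧ F (Icc (-a) a) = 1 ∧
    x = MI F (fun y t => φ (y - t))}

open ProbabilityTheory

lemma φ_sub_eq_gaussianPDFReal (c y : ℝ) : φ (y - c) = gaussianPDFReal c 1 y := by
  simp [φ, gaussianPDFReal]

lemma φ_pos (x : ℝ) : 0 < φ x := by
  unfold φ; positivity

@[fun_prop]
lemma continuous_φ : Continuous φ := by
  unfold φ; fun_prop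

lemma φ_le (x : ℝ) : φ x ≤ (√(2 * π))⁻¹ := by
  unfold φ
  exact mul_le_of_le_one_right (by positivity) (exp_le_one_iff.2 (by nlinarith [sq_nonneg x]))

lemma integrable_φ_sub (c : ℝ) : Integrable fun y => φ (y - c) := by
  simpa only [φ_sub_eq_gaussianPDFReal] using integrable_gaussianPDFReal c 1

lemma integral_φ_sub (c : ℝ) : ∫ y, φ (y - c) = 1 := by
  simpa only [φ_sub_eq_gaussianPDFReal] using integral_gaussianPDFReal_eq_one c one_ne_zero

lemma integrable_sq_mul_φ : Integrable fun z => z ^ 2 * φ z := by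
  refine ((integrable_rpow_mul_exp_neg_mul_sq (b := 1 / 2) (by norm_num) (s := 2)
    (by norm_num)).const_mul (√(2 * π))⁻¹).congr (ae_of_all _ fun z => ?_)
  simp only [rpow_two, φ]
  ring_nf

lemma integrable_add_mul_sq_mul_φ (b d : ℝ) : Integrable fun z => (b + d * z ^ 2) * φ z := by
  have hφ : Integrable φ := by simpa using integrable_φ_sub 0
  refine ((hφ.const_mul b).add (integrable_sq_mul_φ.const_mul d)).congr (ae_of_all _ fun z => ?_)
  simp only [Pi.add_apply]
  ring

lemma integrable_φ_sub_comp {β : Type*} [MeasurableSpace β] (μ : Measure β) [IsFiniteMeasure μ]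
    {g : β → ℝ} (hg : Measurable g) (y : ℝ) : Integrable (fun s => φ (y - g s)) μ :=
  .of_bound (by fun_prop) _ (ae_of_all _ fun s => by
    rw [norm_of_nonneg (φ_pos _).le]; exact φ_le _)

lemma sub_le_mul_log_div {x y : ℝ} (hx : 0 ≤ x) (hy : 0 < y) : x - y ≤ x * log (x / y) := by
  have := mul_le_mul_of_nonneg_left (self_sub_one_le_mul_log (div_nonneg hx hy.le)) hy.le
  rwa [mul_sub, mul_div_cancel₀ _ hy.ne', mul_one, ← mul_assoc, mul_div_cancel₀ _ hy.ne'] at this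

section Integral

variable {α : Type*} [MeasurableSpace α] {μ : Measure α}

lemma integral_mul_log_div_nonneg {f q : α → ℝ} (hf : ∀ x, 0 ≤ f x) (hq : ∀ x, 0 < q x)
    (hf_int : Integrable f μ) (hq_int : Integrable q μ) (hqf : ∫ x, q x ∂μ ≤ ∫ x, f x ∂μ) :
    0 ≤ ∫ x, f x * log (f x / q x) ∂μ := by
  by_cases hL : Integrable (fun x => f x * log (f x / q x)) μ
  · calc (0 : ℝ) ≤ ∫ x, (f x - q x) ∂μ := by rw [integral_sub hf_int hq_int]; linarith
      _ ≤ _ := integral_mono (hf_int.sub hq_int) hL fun x => sub_le_mul_log_div (hf x) (hq x)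
  · rw [integral_undef hL]

/-- No integrability of `f` is needed: if there is none, `∫ f` is the junk value `0`. -/
lemma integral_le_integral_of_integral_nonneg {f g : α → ℝ} (hg : Integrable g μ)
    (hfg : f ≤ᵐ[μ] g) (hg0 : 0 ≤ ∫ x, g x ∂μ) : ∫ x, f x ∂μ ≤ ∫ x, g x ∂μ := by
  by_cases hf : Integrable f μ
  · exact integral_mono_ae hf hg hfg
  · rwa [integral_undef hf]

end Integral

/-- The log-sum inequality, with weights `w`. -/
lemma sum_mul_log_div_sum_le {ι : Type*} (s : Finset ι) {w f q : ι → ℝ}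
    (hw : ∀ i ∈ s, 0 ≤ w i) (hf : ∀ i ∈ s, 0 < f i) (hq : ∀ i ∈ s, 0 < q i) :
    (∑ i ∈ s, w i * f i) * log ((∑ i ∈ s, w i * f i) / ∑ i ∈ s, w i * q i) ≤
      ∑ i ∈ s, w i * (f i * log (f i / q i)) := by
  set A := ∑ i ∈ s, w i * f i
  set B := ∑ i ∈ s, w i * q i
  rcases (Finset.sum_nonneg fun i hi => mul_nonneg (hw i hi) (hq i hi).le).eq_or_lt with hB | hB
  · have hw0 : ∀ i ∈ s, w i = 0 := fun i hi =>
      (mul_eq_zero.1 ((Finset.sum_eq_zero_iff_of_nonneg fun j hj =>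
        mul_nonneg (hw j hj) (hq j hj).le).1 hB.symm i hi)).resolve_right (hq i hi).ne'
    have hA0 : A = 0 := Finset.sum_eq_zero fun i hi => by simp [hw0 i hi]
    rw [hA0, zero_mul]
    exact (Finset.sum_eq_zero fun i hi => by simp [hw0 i hi]).ge
  obtain ⟨j, hj, hwq⟩ := Finset.exists_lt_of_sum_lt (by simpa using hB : ∑ i ∈ s, (0 : ℝ) < B)
  have hA : 0 < A := Finset.sum_pos' (fun i hi => mul_nonneg (hw i hi) (hf i hi).le)
    ⟨j, hj, mul_pos (pos_of_mul_pos_left hwq (hq j hj).le) (hf j hj)⟩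
  have hr : 0 < A / B := div_pos hA hB
  -- `x - y ≤ x log (x / y)` at `x = f i`, `y = q i * (A / B)`, summed with weights `w i`.
  have key : ∀ i ∈ s, w i * f i * log (A / B) + w i * f i - w i * q i * (A / B) ≤
      w i * (f i * log (f i / q i)) := fun i hi => by
    have h := sub_le_mul_log_div (hf i hi).le (mul_pos (hq i hi) hr)
    rw [← div_div, log_div (div_pos (hf i hi) (hq i hi)).ne' hr.ne'] at h
    linear_combination mul_le_mul_of_nonneg_left h (hw i hi)
  calc A * log (A / B) = A * log (A / B) + A - B * (A / B) := by
        rw [mul_div_cancel₀ _ hB.ne']; ring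
    _ = ∑ i ∈ s, (w i * f i * log (A / B) + w i * f i - w i * q i * (A / B)) := by
        rw [Finset.sum_sub_distrib, Finset.sum_add_distrib, ← Finset.sum_mul, ← Finset.sum_mul]
    _ ≤ _ := Finset.sum_le_sum key

lemma ae_mem_of_measure_eq_one {α : Type*} [MeasurableSpace α] {μ : Measure α}
    [IsProbabilityMeasure μ] {S : Set α} (hS : MeasurableSet S) (h : μ S = 1) :
    ∀ᵐ x ∂μ, x ∈ S :=
  mem_ae_iff.2 ((prob_compl_eq_zero_iff hS).2 h)

noncomputable def awgnOutput (ν : Measure ℝ) (y : ℝ) : ℝ := ∫ s, φ (y - s) ∂ν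

noncomputable def awgnDivergence (ν : Measure ℝ) (c : ℝ) : ℝ :=
  ∫ y, φ (y - c) * log (φ (y - c) / awgnOutput ν y)

lemma MI_awgn_eq_integral_awgnDivergence (ν : Measure ℝ) :
    MI ν (fun y t => φ (y - t)) = ∫ c, awgnDivergence ν c ∂ν := rfl

section AWGN

variable (ν : Measure ℝ)

lemma stronglyMeasurable_awgnOutput [SFinite ν] : StronglyMeasurable (awgnOutput ν) :=
  (continuous_φ.comp (continuous_fst.sub continuous_snd)).stronglyMeasurable.integral_prod_right'

lemma stronglyMeasurable_awgnDivergence [SFinite ν] : StronglyMeasurable (awgnDivergence ν) := by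
  have hQ := (stronglyMeasurable_awgnOutput ν).measurable
  refine StronglyMeasurable.integral_prod_right' (f := fun z : ℝ × ℝ =>
    φ (z.2 - z.1) * log (φ (z.2 - z.1) / awgnOutput ν z.2)) (Measurable.stronglyMeasurable ?_)
  fun_prop

variable [IsProbabilityMeasure ν]

lemma integrable_φ_sub_prod : Integrable (fun z : ℝ × ℝ => φ (z.1 - z.2)) (volume.prod ν) := by
  refine (integrable_prod_iff' (by fun_prop)).2 ⟨ae_of_all _ integrable_φ_sub, ?_⟩
  simpa only [norm_of_nonneg (φ_pos _).le, integral_φ_sub] using integrable_const (1 : ℝ)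

lemma integrable_awgnOutput : Integrable (awgnOutput ν) :=
  (integrable_φ_sub_prod ν).integral_prod_left

lemma integral_awgnOutput : ∫ y, awgnOutput ν y = 1 := by
  simp only [awgnOutput]
  rw [integral_integral_swap (f := fun y s => φ (y - s)) (integrable_φ_sub_prod ν)]
  simp [integral_φ_sub]

variable {ν} {a : ℝ} (hν : ν (Icc (-a) a) = 1)
include hν

lemma awgnOutput_ge (y : ℝ) : (√(2 * π))⁻¹ * exp (-(a ^ 2 + y ^ 2)) ≤ awgnOutput ν y := by
  have hφ : ∀ᵐ s ∂ν, (√(2 * π))⁻¹ * exp (-(a ^ 2 + y ^ 2)) ≤ φ (y - s) := by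
    filter_upwards [ae_mem_of_measure_eq_one measurableSet_Icc hν] with s ⟨hs₁, hs₂⟩
    unfold φ
    gcongr
    nlinarith [sq_nonneg (y + s)]
  simpa [awgnOutput] using
    integral_mono_ae (integrable_const _) (integrable_φ_sub_comp ν measurable_id y) hφ

lemma awgnOutput_pos (y : ℝ) : 0 < awgnOutput ν y :=
  lt_of_lt_of_le (by positivity) (awgnOutput_ge hν y)

lemma awgnDivergence_nonneg (c : ℝ) : 0 ≤ awgnDivergence ν c :=
  integral_mul_log_div_nonneg (fun _ => (φ_pos _).le) (awgnOutput_pos hν) (integrable_φ_sub c)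
    (integrable_awgnOutput ν) (by rw [integral_awgnOutput, integral_φ_sub])

variable {c : ℝ} (hc : |c| ≤ a)
include hc

lemma mul_log_div_awgnOutput_le (y : ℝ) :
    φ (y - c) * log (φ (y - c) / awgnOutput ν y) ≤ (3 * a ^ 2 + 2 * (y - c) ^ 2) * φ (y - c) := by
  have hQ := awgnOutput_pos hν y
  have hratio : φ (y - c) / awgnOutput ν y ≤ exp (a ^ 2 + y ^ 2) := by
    rw [div_le_iff₀ hQ]
    calc φ (y - c) ≤ (√(2 * π))⁻¹ := φ_le _
      _ = exp (a ^ 2 + y ^ 2) * ((√(2 * π))⁻¹ * exp (-(a ^ 2 + y ^ 2))) := by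
        rw [mul_left_comm, ← exp_add, add_neg_cancel, exp_zero, mul_one]
      _ ≤ _ := mul_le_mul_of_nonneg_left (awgnOutput_ge hν y) (exp_pos _).le
  have hlog : log (φ (y - c) / awgnOutput ν y) ≤ 3 * a ^ 2 + 2 * (y - c) ^ 2 := by
    refine (log_le_iff_le_exp (div_pos (φ_pos _) hQ)).2 (hratio.trans (exp_le_exp.2 ?_))
    have hc2 : c ^ 2 ≤ a ^ 2 := sq_abs c ▸ pow_le_pow_left₀ (abs_nonneg c) hc 2
    nlinarith [sq_nonneg (y - 2 * c)]
  rw [mul_comm]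
  exact mul_le_mul_of_nonneg_right hlog (φ_pos _).le

lemma integrable_mul_log_div_awgnOutput :
    Integrable fun y => φ (y - c) * log (φ (y - c) / awgnOutput ν y) := by
  have hQ := (stronglyMeasurable_awgnOutput ν).measurable
  exact integrable_of_le_of_le (Measurable.aestronglyMeasurable (by fun_prop))
    (ae_of_all _ fun y => sub_le_mul_log_div (φ_pos _).le (awgnOutput_pos hν y))
    (ae_of_all _ (mul_log_div_awgnOutput_le hν hc))
    ((integrable_φ_sub c).sub (integrable_awgnOutput ν))
    ((integrable_add_mul_sq_mul_φ _ _).comp_sub_right c)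

lemma awgnDivergence_le : awgnDivergence ν c ≤ ∫ z, (3 * a ^ 2 + 2 * z ^ 2) * φ z := by
  rw [← integral_sub_right_eq_self _ c]
  exact integral_mono (integrable_mul_log_div_awgnOutput hν hc)
    ((integrable_add_mul_sq_mul_φ _ _).comp_sub_right c) (mul_log_div_awgnOutput_le hν hc)

end AWGN

section Capacity

variable {ν : Measure ℝ} [IsProbabilityMeasure ν] {a : ℝ}

lemma integrable_awgnDivergence (hν : ν (Icc (-a) a) = 1) : Integrable (awgnDivergence ν) ν := by
  refine .of_bound (stronglyMeasurable_awgnDivergence ν).aestronglyMeasurable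
    (∫ z, (3 * a ^ 2 + 2 * z ^ 2) * φ z) ?_
  filter_upwards [ae_mem_of_measure_eq_one measurableSet_Icc hν] with c hc
  rw [norm_of_nonneg (awgnDivergence_nonneg hν c)]
  exact awgnDivergence_le hν (abs_le.2 hc)

lemma MI_awgn_le_CSm (hν : ν (Icc (-a) a) = 1) : MI ν (fun y t => φ (y - t)) ≤ CSm a := by
  refine le_csSup ⟨∫ z, (3 * a ^ 2 + 2 * z ^ 2) * φ z, ?_⟩ ⟨ν, inferInstance, hν, rfl⟩
  rintro _ ⟨μ, _, hμ, rfl⟩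
  rw [MI_awgn_eq_integral_awgnDivergence]
  calc ∫ c, awgnDivergence μ c ∂μ ≤ ∫ _, (∫ z, (3 * a ^ 2 + 2 * z ^ 2) * φ z) ∂μ := by
        refine integral_mono_ae (integrable_awgnDivergence hμ) (integrable_const _) ?_
        filter_upwards [ae_mem_of_measure_eq_one measurableSet_Icc hμ] with c hc
        exact awgnDivergence_le hμ (abs_le.2 hc)
    _ = _ := by simp

end Capacity

lemma CSm_set_nonempty {a : ℝ} (ha : 0 ≤ a) :
    {x : ℝ | ∃ F : Measure ℝ, IsProbabilityMeasure F ∧ F (Icc (-a) a) = 1 ∧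
      x = MI F (fun y t => φ (y - t))}.Nonempty :=
  ⟨_, .dirac 0, inferInstance, by simp [ha], rfl⟩

lemma MI_map {α β : Type*} [MeasurableSpace α] [MeasurableSpace β] (μ : Measure α) [SFinite μ]
    {f : α → β} (hf : Measurable f) {g : ℝ → β → ℝ} (hg : Measurable (Function.uncurry g)) :
    MI (μ.map f) g = MI μ (fun y t => g y (f t)) := by
  have hg' : Measurable fun z : ℝ × α => g z.1 (f z.2) :=
    hg.comp (measurable_fst.prodMk (hf.comp measurable_snd))
  have hQ : ∀ y, ∫ s, g y s ∂μ.map f = ∫ s, g y (f s) ∂μ := fun y =>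
    integral_map hf.aemeasurable (hg.comp measurable_prodMk_left).aestronglyMeasurable
  have hQm : Measurable fun y => ∫ s, g y (f s) ∂μ :=
    hg'.stronglyMeasurable.integral_prod_right'.measurable
  have hD : StronglyMeasurable fun t => ∫ y, g y t * log (g y t / ∫ s, g y (f s) ∂μ) := by
    have hg'' : Measurable fun z : β × ℝ => g z.2 z.1 := hg.comp measurable_swap
    exact (hg''.mul (hg''.div (hQm.comp measurable_snd)).log).stronglyMeasurable.integral_prod_right'
  simp only [MI, hQ]
  exact integral_map hf.aemeasurable hD.aestronglyMeasurable

section Mixture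

variable {ι : Type*}

instance isProbabilityMeasure_map_eval {F : Measure (ι → ℝ)} [IsProbabilityMeasure F] (i : ι) :
    IsProbabilityMeasure (F.map fun t => t i) :=
  Measure.isProbabilityMeasure_map (measurable_pi_apply i).aemeasurable

lemma measurableSet_abs_le [Countable ι] (a : ι → ℝ) :
    MeasurableSet {t : ι → ℝ | ∀ i, |t i| ≤ a i} := by
  rw [ofPred_forall]
  exact .iInter fun i => measurableSet_le (by fun_prop) measurable_const

lemma map_eval_Icc {a : ι → ℝ} {F : Measure (ι → ℝ)} [IsProbabilityMeasure F]
    (hF : F {t | ∀ i, |t i| ≤ a i} = 1) (i : ι) :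
    F.map (fun t => t i) (Icc (-a i) (a i)) = 1 := by
  rw [Measure.map_apply (measurable_pi_apply i) measurableSet_Icc]
  exact le_antisymm prob_le_one (hF ▸ measure_mono fun t ht => abs_le.1 (ht i))

variable [Fintype ι]

/-- The paper's `C_Sh`: the input is a Shannon strategy `t`, and in state `i`, which has
probability `p i`, the channel transmits `t i`. -/
noncomputable def CSh (a p : ι → ℝ) : ℝ :=
  sSup {x : ℝ | ∃ F : Measure (ι → ℝ), IsProbabilityMeasure F ∧
    F {t | ∀ i, |t i| ≤ a i} = 1 ∧ x = MI F (fun y t => ∑ i, p i * φ (y - t i))}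

variable {a p : ι → ℝ} {F : Measure (ι → ℝ)} [IsProbabilityMeasure F]

lemma integral_mixture_eq_sum_awgnOutput (y : ℝ) :
    ∫ s, ∑ i, p i * φ (y - s i) ∂F = ∑ i, p i * awgnOutput (F.map (fun t => t i)) y := by
  rw [integral_finsetSum _ fun i _ =>
    (integrable_φ_sub_comp F (measurable_pi_apply i) y).const_mul _]
  refine Finset.sum_congr rfl fun i _ => ?_
  rw [integral_const_mul, awgnOutput,
    integral_map (measurable_pi_apply i).aemeasurable (by fun_prop)]

variable (hp : ∀ i, 0 ≤ p i) (hF : F {t | ∀ i, |t i| ≤ a i} = 1)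
include hp hF

lemma integral_mixture_mul_log_div_le {t : ι → ℝ} (ht : ∀ i, |t i| ≤ a i) :
    ∫ y, (∑ i, p i * φ (y - t i)) *
        log ((∑ i, p i * φ (y - t i)) / ∫ s, ∑ i, p i * φ (y - s i) ∂F) ≤
      ∑ i, p i * awgnDivergence (F.map (fun t => t i)) (t i) := by
  have hsupp := map_eval_Icc hF
  have hint : Integrable fun y => ∑ i, p i * (φ (y - t i) *
      log (φ (y - t i) / awgnOutput (F.map (fun t => t i)) y)) :=
    integrable_finsetSum _ fun i _ =>
      (integrable_mul_log_div_awgnOutput (hsupp i) (ht i)).const_mul _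
  have hsum : ∫ y, ∑ i, p i * (φ (y - t i) *
      log (φ (y - t i) / awgnOutput (F.map (fun t => t i)) y)) =
      ∑ i, p i * awgnDivergence (F.map (fun t => t i)) (t i) := by
    rw [integral_finsetSum _ fun i _ =>
      (integrable_mul_log_div_awgnOutput (hsupp i) (ht i)).const_mul _]
    exact Finset.sum_congr rfl fun i _ => integral_const_mul _ _
  rw [← hsum]
  refine integral_le_integral_of_integral_nonneg hint (ae_of_all _ fun y => ?_)
    (hsum ▸ Finset.sum_nonneg fun i _ => mul_nonneg (hp i) (awgnDivergence_nonneg (hsupp i) _))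
  dsimp only
  rw [integral_mixture_eq_sum_awgnOutput]
  exact sum_mul_log_div_sum_le _ (fun i _ => hp i) (fun i _ => φ_pos _)
    (fun i _ => awgnOutput_pos (hsupp i) y)

/-- Convexity of relative entropy: revealing the state to the receiver can only help. -/
lemma MI_mixture_le_sum :
    MI F (fun y t => ∑ i, p i * φ (y - t i)) ≤
      ∑ i, p i * MI (F.map (fun t => t i)) (fun y t => φ (y - t)) := by
  have hsupp := map_eval_Icc hF
  have hint : ∀ i, Integrable (fun t => awgnDivergence (F.map (fun t => t i)) (t i)) F := fun i =>
    (integrable_map_measure (stronglyMeasurable_awgnDivergence _).aestronglyMeasurable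
      (measurable_pi_apply i).aemeasurable).1 (integrable_awgnDivergence (hsupp i))
  have hsum : ∫ t, ∑ i, p i * awgnDivergence (F.map (fun t => t i)) (t i) ∂F =
      ∑ i, p i * MI (F.map (fun t => t i)) (fun y t => φ (y - t)) := by
    rw [integral_finsetSum _ fun i _ => (hint i).const_mul _]
    refine Finset.sum_congr rfl fun i _ => ?_
    rw [integral_const_mul, MI_awgn_eq_integral_awgnDivergence, integral_map
      (measurable_pi_apply i).aemeasurable
      (stronglyMeasurable_awgnDivergence _).aestronglyMeasurable]
  rw [← hsum]
  refine integral_le_integral_of_integral_nonneg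
    (integrable_finsetSum _ fun i _ => (hint i).const_mul _) ?_
    (integral_nonneg fun t => Finset.sum_nonneg fun i _ =>
      mul_nonneg (hp i) (awgnDivergence_nonneg (hsupp i) _))
  filter_upwards [ae_mem_of_measure_eq_one (measurableSet_abs_le a) hF] with t ht
  exact integral_mixture_mul_log_div_le hp hF ht

lemma MI_mixture_le_sum_CSm :
    MI F (fun y t => ∑ i, p i * φ (y - t i)) ≤ ∑ i, p i * CSm (a i) :=
  (MI_mixture_le_sum hp hF).trans <| Finset.sum_le_sum fun i _ =>
    mul_le_mul_of_nonneg_left (MI_awgn_le_CSm (map_eval_Icc hF i)) (hp i)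

end Mixture

section Sandwich

variable {ι : Type*} [Fintype ι] {a p : ι → ℝ}

lemma CSh_le_sum_CSm (ha : ∀ i, 0 ≤ a i) (hp : ∀ i, 0 ≤ p i) :
    CSh a p ≤ ∑ i, p i * CSm (a i) :=
  csSup_le ⟨_, .dirac 0, inferInstance, Measure.dirac_apply_of_mem (by simpa using ha), rfl⟩
    (by rintro _ ⟨F, _, hF, rfl⟩; exact MI_mixture_le_sum_CSm hp hF)

lemma MI_map_const (hps : ∑ i, p i = 1) (ν : Measure ℝ) [SFinite ν] :
    MI (ν.map fun s (_ : ι) => s) (fun y t => ∑ i, p i * φ (y - t i)) =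
      MI ν (fun y t => φ (y - t)) := by
  rw [MI_map ν (f := fun s (_ : ι) => s) (by fun_prop) (by fun_prop)]
  simp only [← Finset.sum_mul, hps, one_mul]

lemma CSm_le_CSh (hp : ∀ i, 0 ≤ p i) (hps : ∑ i, p i = 1) {b : ℝ} (hb : 0 ≤ b)
    (hba : ∀ i, b ≤ a i) : CSm b ≤ CSh a p := by
  refine csSup_le (CSm_set_nonempty hb) ?_
  rintro _ ⟨ν, _, hν, rfl⟩
  have hconst : Measurable fun (s : ℝ) (_ : ι) => s := by fun_prop
  refine le_csSup ⟨∑ i, p i * CSm (a i), ?_⟩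
    ⟨ν.map fun s _ => s, Measure.isProbabilityMeasure_map hconst.aemeasurable, ?_,
      (MI_map_const hps ν).symm⟩
  · rintro _ ⟨F, _, hF, rfl⟩
    exact MI_mixture_le_sum_CSm hp hF
  · rw [Measure.map_apply hconst (measurableSet_abs_le a)]
    exact le_antisymm prob_le_one
      (hν ▸ measure_mono fun s hs i => (abs_le.2 hs).trans (hba i))

end Sandwich

/-- The no-side-information capacity is at most the causal-transmitter-side-information
capacity `C_Sh`, which is at most the full-side-information capacity:
`C_Sm(min aᵢ) ≤ C_Sh ≤ Σᵢ pᵢ C_Sm(aᵢ)`. -/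
theorem capacity_sandwich (M : ℕ) [NeZero M] (a : Fin M → ℝ) (ha : ∀ i, 0 < a i)
    (p : Fin M → ℝ) (hp : ∀ i, 0 ≤ p i) (hps : ∑ i, p i = 1) :
    CSm (⨅ i, a i) ≤
      sSup {x : ℝ | ∃ F : Measure (Fin M → ℝ), IsProbabilityMeasure F ∧
          F {t | ∀ i, |t i| ≤ a i} = 1 ∧
          x = MI F (fun y t => ∑ i, p i * φ (y - t i))} ∧
    sSup {x : ℝ | ∃ F : Measure (Fin M → ℝ), IsProbabilityMeasure F ∧
          F {t | ∀ i, |t i| ≤ a i} = 1 ∧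
          x = MI F (fun y t => ∑ i, p i * φ (y - t i))} ≤
      ∑ i, p i * CSm (a i) :=
  ⟨CSm_le_CSh hp hps (le_ciInf fun i => (ha i).le) (ciInf_le (Finite.bddBelow_range a)),
    CSh_le_sum_CSm (fun i => (ha i).le) hp⟩
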